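/- Let Y be a subset of the finite set X and let red : M(Y) → M_S(Y) be any function such that for every w ∈ M(Y), red(w) realizes the same transformation of X as w, and red(w) = w whenever w ∈ M_S(Y). Then red extends to a unique semigroup homomorphism φ from the subsemigroup M(Y)⁺ of T⁺ generated by M(Y) onto the subsemigroup M_S(Y)⁺ generated by M_S(Y); φ is a retraction, i.e., φ(w) = w for every w ∈ M_S(Y)⁺; and for every word w ∈ M(Y)⁺, the realizations of w and φ(w) are equal as transformations of X (in particular they induce the same permutation of Y). -/
import Mathlib


/-- Realization of a word (list of generators), applied left to right. -/
def realize {X : Type*} (w : List (X → X)) : X → X :=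
  fun x => w.foldl (fun a f => f a) x

/-- `w` is a word over the generator set `T`: a nonempty list of elements of `T`. -/
def IsWordOver {X : Type*} (T : Finset (X → X)) (w : List (X → X)) : Prop :=
  w ≠ [] ∧ ∀ f ∈ w, f ∈ T

/-- A word is straight if no nonempty proper prefix realizes the identity, and distinct
nonempty prefixes realize distinct transformations. -/
def IsStraight {X : Type*} (w : List (X → X)) : Prop :=
  (∀ k, 1 ≤ k → k < w.length → realize (w.take k) ≠ id) ∧
  (∀ k l, 1 ≤ k → k ≤ w.length → 1 ≤ l → l ≤ w.length →
    realize (w.take k) = realize (w.take l) → k = l)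

/-- The semigroup generated by `T`: all transformations realized by nonempty words over `T`. -/
def SgpGen {X : Type*} (T : Finset (X → X)) : Set (X → X) :=
  {s | ∃ w : List (X → X), IsWordOver T w ∧ realize w = s}

/-- A permutator word of `Y`: a word over `T` whose realization maps `Y` onto `Y`. -/
def Permutator {X : Type*} (T : Finset (X → X)) (Y : Set X) (w : List (X → X)) : Prop :=
  IsWordOver T w ∧ realize w '' Y = Y

/-- A minimal permutator word of `Y`: a permutator word not factorizable into two
permutator words. -/
def MinPermutator {X : Type*} (T : Finset (X → X)) (Y : Set X) (w : List (X → X)) : Prop :=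
  Permutator T Y w ∧ ¬ ∃ u v, w = u ++ v ∧ Permutator T Y u ∧ Permutator T Y v

/-- The full permutator semigroup `Perm(Y)` of elements of `⟨T⟩` mapping `Y` onto `Y`. -/
def PermSet {X : Type*} (T : Finset (X → X)) (Y : Set X) : Set (X → X) :=
  {s | s ∈ SgpGen T ∧ s '' Y = Y}

/-- `M(Y)⁺`: the subsemigroup of `T⁺` generated by the minimal permutator words of `Y`,
i.e. all concatenations of finitely many elements of `M(Y)`. -/
def MPlus {X : Type*} (T : Finset (X → X)) (Y : Set X) : Set (List (X → X)) :=
  {w | ∃ L : List (List (X → X)), L ≠ [] ∧ (∀ u ∈ L, MinPermutator T Y u) ∧ L.flatten = w}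

/-- `M_S(Y)⁺`: the subsemigroup of `T⁺` generated by the minimal straight permutator
words of `Y`. -/
def MSPlus {X : Type*} (T : Finset (X → X)) (Y : Set X) : Set (List (X → X)) :=
  {w | ∃ L : List (List (X → X)), L ≠ [] ∧
    (∀ u ∈ L, MinPermutator T Y u ∧ IsStraight u) ∧ L.flatten = w}

lemma realize_append {X : Type*} (u v : List (X → X)) :
    realize (u ++ v) = realize v ∘ realize u := by
  funext x; simp [realize, List.foldl_append]

lemma perm_tail {X : Type*} {T : Finset (X → X)} {Y : Set X} {u r : List (X → X)}
    (hur : Permutator T Y (u ++ r)) (hu : Permutator T Y u) (hr : r ≠ []) :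
    Permutator T Y r := by
  obtain ⟨⟨_, hmem⟩, himg⟩ := hur
  obtain ⟨_, himgu⟩ := hu
  refine ⟨⟨hr, fun f hf => hmem f (by simp [hf])⟩, ?_⟩
  rw [realize_append, Set.image_comp, himgu] at himg
  exact himg

lemma prefix_eq_of_min {X : Type*} {T : Finset (X → X)} {Y : Set X} {u v : List (X → X)}
    (hu : MinPermutator T Y u) (hv : MinPermutator T Y v) (h : u <+: v) : u = v := by
  obtain ⟨r, hr⟩ := h
  by_cases hrnil : r = []
  · simpa [hrnil] using hr
  · exact absurd ⟨u, r, hr.symm, hu.1, perm_tail (hr ▸ hv.1) hu.1 hrnil⟩ hv.2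

lemma factor_unique {X : Type*} {T : Finset (X → X)} {Y : Set X} :
    ∀ (L₁ L₂ : List (List (X → X))), L₁ ≠ [] → L₂ ≠ [] →
    (∀ u ∈ L₁, MinPermutator T Y u) → (∀ u ∈ L₂, MinPermutator T Y u) →
    L₁.flatten = L₂.flatten → L₁ = L₂ := by
  intro L₁
  induction L₁ with
  | nil => intro _ h; exact absurd rfl h
  | cons u L₁ ih =>
    rintro (_ | ⟨v, L₂⟩) _ h2 h₁ h₂ hfl
    · exact absurd rfl h2
    · simp only [List.flatten_cons] at hfl
      have hu := h₁ u (by simp)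
      have hv := h₂ v (by simp)
      have hpre : u <+: v ∨ v <+: u :=
        List.prefix_or_prefix_of_prefix (⟨L₁.flatten, hfl⟩ : u <+: v ++ L₂.flatten)
          (List.prefix_append v L₂.flatten)
      have huv : u = v := by
        rcases hpre with h | h
        · exact prefix_eq_of_min hu hv h
        · exact (prefix_eq_of_min hv hu h).symm
      subst huv
      have htail : L₁.flatten = L₂.flatten := by
        exact List.append_cancel_left hfl
      by_cases h1 : L₁ = []
      · subst h1
        have : L₂.flatten = [] := htail.symm
        have hL2 : L₂ = [] := by
          cases L₂ with
          | nil => rfl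
          | cons w L₂ =>
            exfalso
            have hw : w = [] := (List.flatten_eq_nil_iff.mp this) w (by simp)
            exact (h₂ w (by simp)).1.1.1 hw
        rw [hL2]
      · by_cases h2' : L₂ = []
        · subst h2'
          have : L₁.flatten = [] := htail
          exfalso
          cases L₁ with
          | nil => exact h1 rfl
          | cons w L₁ =>
            have hw : w = [] := (List.flatten_eq_nil_iff.mp this) w (by simp)
            exact (h₁ w (by simp [List.mem_cons])).1.1.1 hw
        · rw [ih L₂ h1 h2' (fun w hw => h₁ w (by simp [hw])) (fun w hw => h₂ w (by simp [hw])) htail]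

lemma realize_flatten_map {X : Type*} {T : Finset (X → X)} {Y : Set X}
    {red : List (X → X) → List (X → X)}
    (hred_real : ∀ w, MinPermutator T Y w → realize (red w) = realize w) :
    ∀ L : List (List (X → X)), (∀ u ∈ L, MinPermutator T Y u) →
      realize ((L.map red).flatten) = realize L.flatten := by
  intro L
  induction L with
  | nil => intro _; rfl
  | cons a L ih =>
    intro h
    rw [List.map_cons, List.flatten_cons, List.flatten_cons, realize_append, realize_append,
      hred_real a (h a (by simp)), ih (fun w hw => h w (by simp [hw]))]

/-- Any reduction map `red : M(Y) → M_S(Y)` fixing `M_S(Y)` and preserving realizations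
extends to a unique semigroup homomorphism `φ : M(Y)⁺ ↠ M_S(Y)⁺`; `φ` is a retraction
(the identity on `M_S(Y)⁺`), and `w` and `φ(w)` realize the same transformation of `X`
(in particular the same permutation of `Y`). -/
theorem reduction_extends_to_unique_retraction
    (X : Type*) [Fintype X] [Nonempty X] (T : Finset (X → X)) (Y : Set X)
    (red : List (X → X) → List (X → X))
    (hred_mem : ∀ w, MinPermutator T Y w → MinPermutator T Y (red w) ∧ IsStraight (red w))
    (hred_real : ∀ w, MinPermutator T Y w → realize (red w) = realize w)
    (hred_fix : ∀ w, MinPermutator T Y w → IsStraight w → red w = w) :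
    ∃ φ : ↥(MPlus T Y) → List (X → X),
      ((∀ u v : ↥(MPlus T Y), ∀ huv : (↑u ++ ↑v : List (X → X)) ∈ MPlus T Y,
          φ ⟨↑u ++ ↑v, huv⟩ = φ u ++ φ v) ∧
       (∀ u : ↥(MPlus T Y), MinPermutator T Y ↑u → φ u = red ↑u) ∧
       (∀ u : ↥(MPlus T Y), φ u ∈ MSPlus T Y)) ∧
      (∀ v ∈ MSPlus T Y, ∃ u : ↥(MPlus T Y), φ u = v) ∧
      (∀ u : ↥(MPlus T Y), (↑u : List (X → X)) ∈ MSPlus T Y → φ u = ↑u) ∧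
      (∀ u : ↥(MPlus T Y), realize (φ u) = realize ↑u) ∧
      (∀ u : ↥(MPlus T Y), ∀ y ∈ Y, realize (φ u) y = realize (↑u : List (X → X)) y) ∧
      (∀ φ' : ↥(MPlus T Y) → List (X → X),
        ((∀ u v : ↥(MPlus T Y), ∀ huv : (↑u ++ ↑v : List (X → X)) ∈ MPlus T Y,
            φ' ⟨↑u ++ ↑v, huv⟩ = φ' u ++ φ' v) ∧
         (∀ u : ↥(MPlus T Y), MinPermutator T Y ↑u → φ' u = red ↑u) ∧
         (∀ u : ↥(MPlus T Y), φ' u ∈ MSPlus T Y)) → φ' = φ) := by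
  classical
  -- canonical factorization
  have hex : ∀ u : ↥(MPlus T Y), ∃ L : List (List (X → X)),
      L ≠ [] ∧ (∀ w ∈ L, MinPermutator T Y w) ∧ L.flatten = ↑u := fun u => u.2
  set F : ↥(MPlus T Y) → List (List (X → X)) := fun u => (hex u).choose with hFdef
  have hF : ∀ u : ↥(MPlus T Y), F u ≠ [] ∧ (∀ w ∈ F u, MinPermutator T Y w) ∧
      (F u).flatten = ↑u := fun u => (hex u).choose_spec
  have hFeq : ∀ (u : ↥(MPlus T Y)) (L : List (List (X → X))), L ≠ [] →
      (∀ w ∈ L, MinPermutator T Y w) → L.flatten = ↑u → F u = L := fun u L h1 h2 h3 =>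
    factor_unique _ _ (hF u).1 h1 (hF u).2.1 h2 ((hF u).2.2.trans h3.symm)
  refine ⟨fun u => ((F u).map red).flatten, ⟨?_, ?_, ?_⟩, ?_, ?_, ?_, ?_, ?_⟩
  case _ => -- hom
    intro u v huv
    have h1 : F ⟨↑u ++ ↑v, huv⟩ = F u ++ F v := by
      apply hFeq
      · simp [(hF u).1]
      · intro w hw
        rcases List.mem_append.mp hw with h | h
        · exact (hF u).2.1 w h
        · exact (hF v).2.1 w h
      · rw [List.flatten_append, (hF u).2.2, (hF v).2.2]
    simp only [h1, List.map_append, List.flatten_append]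
  case _ => -- agrees with red on M(Y)
    intro u hu
    have h1 : F u = [↑u] := hFeq u [↑u] (by simp) (by simpa using hu) (by simp)
    simp [h1]
  case _ => -- lands in MSPlus
    intro u
    refine ⟨(F u).map red, by simp [(hF u).1], ?_, rfl⟩
    intro w hw
    obtain ⟨a, ha, rfl⟩ := List.mem_map.mp hw
    exact hred_mem a ((hF u).2.1 a ha)
  case _ => -- surjective onto MSPlus
    intro v hv
    obtain ⟨L, hL1, hL2, hL3⟩ := hv
    have hvM : v ∈ MPlus T Y := ⟨L, hL1, fun w hw => (hL2 w hw).1, hL3⟩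
    refine ⟨⟨v, hvM⟩, ?_⟩
    have h1 : F ⟨v, hvM⟩ = L := hFeq _ L hL1 (fun w hw => (hL2 w hw).1) hL3
    have h2 : L.map red = L := by
      conv_rhs => rw [← List.map_id L]
      exact List.map_congr_left fun a ha => hred_fix a (hL2 a ha).1 (hL2 a ha).2
    simp [h1, h2, hL3]
  case _ => -- retraction
    intro u hu
    obtain ⟨L, hL1, hL2, hL3⟩ := hu
    have h1 : F u = L := hFeq _ L hL1 (fun w hw => (hL2 w hw).1) hL3
    have h2 : L.map red = L := by
      conv_rhs => rw [← List.map_id L]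
      exact List.map_congr_left fun a ha => hred_fix a (hL2 a ha).1 (hL2 a ha).2
    simp [h1, h2, hL3]
  case _ => -- same realization
    intro u
    rw [realize_flatten_map hred_real (F u) (hF u).2.1, (hF u).2.2]
  case _ => -- same on Y
    intro u y _
    rw [realize_flatten_map hred_real (F u) (hF u).2.1, (hF u).2.2]
  case _ => -- uniqueness
    rintro φ' ⟨h'hom, h'red, _⟩
    funext u
    have key : ∀ L : List (List (X → X)), L ≠ [] → (∀ w ∈ L, MinPermutator T Y w) →
        ∀ v : ↥(MPlus T Y), (↑v : List (X → X)) = L.flatten → φ' v = (L.map red).flatten := by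
      intro L
      induction L with
      | nil => intro h; exact absurd rfl h
      | cons a L ih =>
        intro _ hmem v hv
        cases L with
        | nil =>
          have ha : MinPermutator T Y ↑v := by
            have : (↑v : List (X → X)) = a := by simpa using hv
            rw [this]; exact hmem a (by simp)
          rw [h'red v ha]
          have : (↑v : List (X → X)) = a := by simpa using hv
          simp [this]
        | cons b L =>
          have haM : a ∈ MPlus T Y := ⟨[a], by simp, by simpa using hmem a (by simp), by simp⟩
          have htM : (b :: L).flatten ∈ MPlus T Y :=
            ⟨b :: L, by simp, fun w hw => hmem w (by simp [hw]), rfl⟩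
          have hvsplit : (↑v : List (X → X)) = a ++ (b :: L).flatten := by
            simpa [List.flatten_cons] using hv
          have hvM : (a ++ (b :: L).flatten) ∈ MPlus T Y := hvsplit ▸ v.2
          have hveq : v = (⟨a ++ (b :: L).flatten, hvM⟩ : ↥(MPlus T Y)) :=
            Subtype.ext hvsplit
          rw [hveq, h'hom ⟨a, haM⟩ ⟨(b :: L).flatten, htM⟩ hvM]
          have h1 : φ' ⟨a, haM⟩ = red a := by
            have := h'red ⟨a, haM⟩ (hmem a (by simp))
            simpa using this
          have h2 : φ' ⟨(b :: L).flatten, htM⟩ = ((b :: L).map red).flatten :=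
            ih (by simp) (fun w hw => hmem w (by simp [hw])) _ rfl
          rw [h1, h2]
          simp
    have := key (F u) (hF u).1 (hF u).2.1 u (hF u).2.2.symm
    exact this
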